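/- Every symmetrized monomial of the form [a,b,0,…,0] (at most two nonzero entries) is completely squeezable: every symmetrized monomial of the same degree and arity that is strictly smaller in lexicographic order lies strictly below it in the squeezing order. -/

import Mathlib

/-- One squeeze: decrement an entry `a` and increment an entry `b` with `a > b + 1`. -/
def SqueezeStep (s t : Multiset ℕ) : Prop :=
  ∃ (u : Multiset ℕ) (a b : ℕ), b + 1 < a ∧ s = a ::ₘ b ::ₘ u ∧ t = (a - 1) ::ₘ (b + 1) ::ₘ u

/-- The (strict) squeezing order: `t` is obtained from `s` by a nonempty sequence of squeezes. -/
def Squeezes (s t : Multiset ℕ) : Prop := Relation.TransGen SqueezeStep s t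

/-- A symmetrized monomial written as a weakly decreasing sequence. -/
def sortedDesc (s : Multiset ℕ) : List ℕ := (Multiset.sort s (· ≤ ·)).reverse

/-- The strict lexicographic order on symmetrized monomials, compared as weakly
decreasing sequences. -/
def LexGT (s t : Multiset ℕ) : Prop := List.Lex (· < ·) (sortedDesc t) (sortedDesc s)

/-!
Let `s = {A, B, 0, …, 0}` with `B ≤ A`. A multiset `t ≠ s` of the same size and sum that is
lexicographically below `s` either has all entries `< A`, or consists of `A` and entries `≤ B`.
This class is stable under unsqueezing: moving one unit from a positive entry onto a maximal
entry of the part lying below the threshold (`A`, resp. `B`) produces `s` or another member of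
the class, and squeezes back onto `t`. Unsqueezing raises the sum of squares, which is bounded by
the square of the sum, so after finitely many steps it reaches `s`.
-/

theorem Multiset.sum_map_sq_le_sq_sum (t : Multiset ℕ) : (t.map (· ^ 2)).sum ≤ t.sum ^ 2 := by
  induction t using Multiset.induction with
  | empty => simp
  | cons a u ih =>
    simp only [Multiset.map_cons, Multiset.sum_cons]
    nlinarith [Nat.zero_le (a * u.sum)]

theorem Multiset.eq_cons_replicate_zero_of_sum_le {z : ℕ} {v : Multiset ℕ} (hz : z ∈ v)
    (hsum : v.sum ≤ z) : v = z ::ₘ Multiset.replicate (Multiset.card v - 1) 0 := by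
  have hzero : (v.erase z).sum = 0 := by
    have := Multiset.sum_erase hz
    omega
  rw [Multiset.sum_eq_zero_iff, ← Multiset.eq_replicate_card] at hzero
  calc v = z ::ₘ v.erase z := (Multiset.cons_erase hz).symm
    _ = _ := by rw [hzero, Multiset.card_erase_of_mem hz]; rfl

namespace SqueezeStep

variable {s t : Multiset ℕ}

theorem card_eq (h : SqueezeStep s t) : Multiset.card t = Multiset.card s := by
  obtain ⟨u, a, b, -, rfl, rfl⟩ := h
  simp

theorem sum_eq (h : SqueezeStep s t) : t.sum = s.sum := by
  obtain ⟨u, a, b, hab, rfl, rfl⟩ := h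
  simp only [Multiset.sum_cons]
  omega

theorem sum_sq_lt (h : SqueezeStep s t) : (t.map (· ^ 2)).sum < (s.map (· ^ 2)).sum := by
  obtain ⟨u, a, b, hab, rfl, rfl⟩ := h
  obtain ⟨c, rfl⟩ : ∃ c, a = c + 1 := ⟨a - 1, by omega⟩
  simp only [Multiset.map_cons, Multiset.sum_cons, Nat.add_sub_cancel]
  nlinarith

theorem cons (h : SqueezeStep s t) (x : ℕ) : SqueezeStep (x ::ₘ s) (x ::ₘ t) := by
  obtain ⟨u, a, b, hab, rfl, rfl⟩ := h
  exact ⟨x ::ₘ u, a, b, hab, by simp only [Multiset.cons_swap], by simp only [Multiset.cons_swap]⟩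

end SqueezeStep

theorem wellFounded_squeezeStep : WellFounded SqueezeStep :=
  Subrelation.wf
    (fun {s t} h => by
      show s.sum ^ 2 - (s.map (· ^ 2)).sum < t.sum ^ 2 - (t.map (· ^ 2)).sum
      have := h.sum_sq_lt
      have := s.sum_map_sq_le_sq_sum
      rw [← h.sum_eq] at this ⊢
      omega)
    (measure fun t : Multiset ℕ => t.sum ^ 2 - (t.map (· ^ 2)).sum).wf

theorem reflTransGen_squeezeStep_of_forall_exists {s : Multiset ℕ} {T : Multiset ℕ → Prop}
    (hT : ∀ t, T t → t ≠ s → ∃ t', T t' ∧ SqueezeStep t' t) :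
    ∀ t, T t → Relation.ReflTransGen SqueezeStep s t := by
  intro t
  induction t using wellFounded_squeezeStep.induction with
  | _ t ih =>
    intro ht
    by_cases hts : t = s
    · exact hts ▸ .refl
    obtain ⟨t', ht', hstep⟩ := hT t ht hts
    exact (ih t' hstep ht').tail hstep

theorem exists_squeezeStep_of_forall_lt {C : ℕ} {v : Multiset ℕ} (hv : v ≠ 0)
    (hlt : ∀ z ∈ v, z < C) (hsum : C ≤ v.sum) :
    ∃ v', (∀ z ∈ v', z ≤ C) ∧ SqueezeStep v' v := by
  obtain ⟨x, hx, hmax⟩ := Multiset.exists_max_image id hv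
  obtain ⟨y, hy, hy0⟩ : ∃ y ∈ v.erase x, y ≠ 0 := by
    by_contra! h
    have := Multiset.sum_erase hx
    rw [Multiset.sum_eq_zero_iff.mpr h] at this
    have := hlt x hx
    omega
  set u := (v.erase x).erase y
  have hv : v = x ::ₘ y ::ₘ u := by
    rw [Multiset.cons_erase hy, Multiset.cons_erase hx]
  have hyx : y ≤ x := hmax y (Multiset.mem_of_mem_erase hy)
  refine ⟨(x + 1) ::ₘ (y - 1) ::ₘ u, ?_, u, x + 1, y - 1, by omega, rfl, ?_⟩
  · have := hlt x hx
    simp only [Multiset.mem_cons]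
    rintro z (rfl | rfl | hz)
    · omega
    · omega
    · exact (hlt z (by rw [hv]; simp [hz])).le
  · rw [hv, Nat.add_sub_cancel, Nat.sub_add_cancel (Nat.one_le_iff_ne_zero.mpr hy0)]

/-- For `B ≤ A`, these are the multisets with sum `A + B` lying lexicographically weakly below
`{A, B, 0, …, 0}`. -/
def BoundedByPair (A B : ℕ) (t : Multiset ℕ) : Prop :=
  (∀ z ∈ t, z < A) ∨ ∃ v, t = A ::ₘ v ∧ ∀ z ∈ v, z ≤ B

theorem BoundedByPair.exists_squeezeStep {A B : ℕ} {t : Multiset ℕ} (ht : BoundedByPair A B t)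
    (hcard : 2 ≤ Multiset.card t) (hsum : t.sum = A + B)
    (hne : t ≠ A ::ₘ B ::ₘ Multiset.replicate (Multiset.card t - 2) 0) :
    ∃ t', BoundedByPair A B t' ∧ SqueezeStep t' t := by
  rcases ht with hlt | ⟨v, rfl, hle⟩
  · have ht0 : t ≠ 0 := by rintro rfl; simp at hcard
    obtain ⟨t', hle, hstep⟩ := exists_squeezeStep_of_forall_lt ht0 hlt (by omega)
    refine ⟨t', ?_, hstep⟩
    by_cases hA : A ∈ t'
    · have hrest : (t'.erase A).sum = B := by
        have := Multiset.sum_erase hA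
        rw [← hstep.sum_eq] at this
        omega
      exact .inr ⟨t'.erase A, (Multiset.cons_erase hA).symm,
        fun z hz => hrest ▸ Multiset.le_sum_of_mem hz⟩
    · exact .inl fun z hz => lt_of_le_of_ne (hle z hz) (ne_of_mem_of_not_mem hz hA)
  · rw [Multiset.sum_cons, Nat.add_left_cancel_iff] at hsum
    rw [Multiset.card_cons] at hcard hne
    by_cases hB : B ∈ v
    · have hv := Multiset.eq_cons_replicate_zero_of_sum_le hB hsum.le
      rw [show Multiset.card v + 1 - 2 = Multiset.card v - 1 by omega, ← hv] at hne
      exact absurd rfl hne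
    have hv0 : v ≠ 0 := by rintro rfl; simp at hcard
    have hlt : ∀ z ∈ v, z < B := fun z hz => lt_of_le_of_ne (hle z hz) (ne_of_mem_of_not_mem hz hB)
    obtain ⟨v', hle', hstep⟩ := exists_squeezeStep_of_forall_lt hv0 hlt hsum.ge
    exact ⟨A ::ₘ v', .inr ⟨v', rfl, hle'⟩, hstep.cons A⟩

theorem reflTransGen_squeezeStep_of_boundedByPair {A B n : ℕ} (hn : 2 ≤ n) {t : Multiset ℕ}
    (hcard : Multiset.card t = n) (hsum : t.sum = A + B) (ht : BoundedByPair A B t) :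
    Relation.ReflTransGen SqueezeStep (A ::ₘ B ::ₘ Multiset.replicate (n - 2) 0) t := by
  refine reflTransGen_squeezeStep_of_forall_exists
    (T := fun t => Multiset.card t = n ∧ t.sum = A + B ∧ BoundedByPair A B t) ?_ t
    ⟨hcard, hsum, ht⟩
  rintro t ⟨rfl, hsum, ht⟩ hne
  obtain ⟨t', ht', hstep⟩ := ht.exists_squeezeStep hn hsum hne
  exact ⟨t', ⟨hstep.card_eq.symm, hstep.sum_eq ▸ hsum, ht'⟩, hstep⟩

theorem List.forall_le_of_lex_cons {l m : List ℕ} {d : ℕ} (hl : l.Pairwise (· ≥ ·))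
    (h : List.Lex (· < ·) l (d :: m)) : ∀ z ∈ l, z ≤ d := by
  cases l with
  | nil => simp
  | cons c l =>
    have hcd : c ≤ d := by
      cases h with
      | rel h => exact h.le
      | cons => exact le_rfl
    rw [List.pairwise_cons] at hl
    simp only [List.mem_cons, forall_eq_or_imp]
    exact ⟨hcd, fun z hz => (hl.1 z hz).trans hcd⟩

theorem boundedByPair_of_lex {A B : ℕ} {l m : List ℕ} (hl : l.Pairwise (· ≥ ·))
    (h : List.Lex (· < ·) l (A :: B :: m)) : BoundedByPair A B l := by
  cases l with
  | nil => exact .inl (by simp)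
  | cons c l =>
    rw [List.pairwise_cons] at hl
    cases h with
    | rel h =>
      refine .inl fun z hz => ?_
      rcases List.mem_cons.mp hz with rfl | hz
      exacts [h, (hl.1 z hz).trans_lt h]
    | cons h => exact .inr ⟨l, rfl, List.forall_le_of_lex_cons hl.2 h⟩

theorem coe_sortedDesc (t : Multiset ℕ) : (sortedDesc t : Multiset ℕ) = t := by
  rw [sortedDesc, Multiset.coe_reverse, Multiset.sort_eq]

theorem pairwise_sortedDesc (t : Multiset ℕ) : (sortedDesc t).Pairwise (· ≥ ·) :=
  List.pairwise_reverse.mpr (Multiset.pairwise_sort t (· ≤ ·))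

theorem sortedDesc_coe_of_pairwise {l : List ℕ} (hl : l.Pairwise (· ≥ ·)) :
    sortedDesc l = l := by
  rw [sortedDesc, ← Multiset.coe_reverse, Multiset.coe_sort,
    List.mergeSort_eq_self _ (List.pairwise_reverse.mpr hl), List.reverse_reverse]

theorem boundedByPair_of_lexGT {A B : ℕ} (hBA : B ≤ A) (m : ℕ) {t : Multiset ℕ}
    (h : LexGT (A ::ₘ B ::ₘ Multiset.replicate m 0) t) : BoundedByPair A B t := by
  have hs : A ::ₘ B ::ₘ Multiset.replicate m 0 = ((A :: B :: List.replicate m 0 : List ℕ) :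
      Multiset ℕ) := by
    rw [← Multiset.coe_replicate]
    rfl
  rw [LexGT, hs, sortedDesc_coe_of_pairwise (by simp [hBA, List.pairwise_replicate])] at h
  simpa only [coe_sortedDesc] using boundedByPair_of_lex (pairwise_sortedDesc t) h

theorem squeezes_of_lexGT_of_le {A B n : ℕ} (hBA : B ≤ A) (hn : 2 ≤ n) {t : Multiset ℕ}
    (hcard : Multiset.card t = n) (hsum : t.sum = A + B)
    (hlex : LexGT (A ::ₘ B ::ₘ Multiset.replicate (n - 2) 0) t) :
    Squeezes (A ::ₘ B ::ₘ Multiset.replicate (n - 2) 0) t := by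
  have hne : t ≠ A ::ₘ B ::ₘ Multiset.replicate (n - 2) 0 := by
    rintro rfl
    exact Std.Irrefl.irrefl (r := List.Lex (· < ·)) _ hlex
  exact (Relation.reflTransGen_iff_eq_or_transGen.mp (reflTransGen_squeezeStep_of_boundedByPair
    hn hcard hsum (boundedByPair_of_lexGT hBA _ hlex))).resolve_left hne

theorem stmt_15 (n : ℕ) (a b : ℕ) (s : Multiset ℕ)
    (hs : s = a ::ₘ b ::ₘ Multiset.replicate (n - 2) 0) (hcard : Multiset.card s = n) :
    ∀ t : Multiset ℕ, Multiset.card t = n → t.sum = s.sum → LexGT s t → Squeezes s t := by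
  subst hs
  have hn : 2 ≤ n := by simp at hcard; omega
  intro t htc hts hlex
  simp only [Multiset.sum_cons, Multiset.sum_replicate, smul_zero, add_zero] at hts
  rcases le_total b a with hba | hab
  · exact squeezes_of_lexGT_of_le hba hn htc hts hlex
  · rw [Multiset.cons_swap] at hlex ⊢
    exact squeezes_of_lexGT_of_le hab hn htc (by omega) hlex
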